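/- arXiv:2110.07946 — 9 statements merged into one kernel-verified Lean document; each statement's English description precedes it below -/
import Mathlib

section
/- The quartic polynomial g(t) = (3 - 6a)t^4 + 4b t^3 + 6a t^2 + 1 is nonnegative for all real t if and only if a ≥ -1 and b^2 ≤ 1 - 2a^3 - 3a^2. -/
/-!
With `t = -1/s`, `g(t) = t⁴ h(s)` for `h(s) = s⁴ + 6a s² - 4b s + 3 - 6a`, and the critical points
of `h` are the roots `r` of `r³ + 3ar = b`. Expanding `g` around such a critical point gives
`g(t) = (1 + rt)² ((1 - rt)² + 2(r² + 3a)t²) + 3(1 + r²)(1 - 2a - r²)t⁴`, so `g ≥ 0` once the cubic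
has a root with `-3a ≤ r² ≤ 1 - 2a`; when `a ≥ -1` and `b² ≤ (1 + a)²(1 - 2a) = 1 - 2a³ - 3a²`, the
intermediate value theorem on `[√(max 0 (-3a)), √(1 - 2a)]` provides one. Conversely, evaluating
`g` at `±1/√(1 - 2a)` gives `|b| ≤ (1 + a)√(1 - 2a)`.
-/

open Real

def quartic (a b t : ℝ) : ℝ := (3 - 6*a)*t^4 + 4*b*t^3 + 6*a*t^2 + 1

lemma quartic_neg (a b t : ℝ) : quartic a (-b) (-t) = quartic a b t := by
  unfold quartic; ring

lemma quartic_nonneg_iff_neg {a b : ℝ} :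
    (∀ t, 0 ≤ quartic a (-b) t) ↔ ∀ t, 0 ≤ quartic a b t :=
  ⟨fun h t => quartic_neg a b t ▸ h (-t), fun h t => by
    have := h (-t)
    rwa [← quartic_neg, neg_neg] at this⟩

lemma quartic_cubic_eq (a r t : ℝ) :
    quartic a (r^3 + 3*a*r) t =
      (1 + r*t)^2 * ((1 - r*t)^2 + 2*(r^2 + 3*a)*t^2) + 3*(1 + r^2)*(1 - 2*a - r^2)*t^4 := by
  unfold quartic; ring

lemma quartic_cubic_nonneg {a r : ℝ} (h₁ : 0 ≤ r^2 + 3*a) (h₂ : r^2 ≤ 1 - 2*a) (t : ℝ) :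
    0 ≤ quartic a (r^3 + 3*a*r) t := by
  rw [quartic_cubic_eq]
  have : 0 ≤ 1 - 2*a - r^2 := by linarith
  positivity

lemma exists_cubic_eq_of_sq_le {a b : ℝ} (ha : -1 ≤ a) (hb₀ : 0 ≤ b)
    (hb : b^2 ≤ (1 + a)^2 * (1 - 2*a)) :
    ∃ r, r^3 + 3*a*r = b ∧ 0 ≤ r^2 + 3*a ∧ r^2 ≤ 1 - 2*a := by
  have h2a : 0 ≤ 1 - 2*a := by
    by_contra! h
    nlinarith [mul_pos (show 0 < (1 + a)^2 by nlinarith) (show 0 < 2*a - 1 by linarith)]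
  set L := √(max 0 (-3*a))
  set R := √(1 - 2*a)
  have hL₀ : 0 ≤ L := sqrt_nonneg _
  have hL : L^2 = max 0 (-3*a) := sq_sqrt (le_max_left _ _)
  have hR : R^2 = 1 - 2*a := sq_sqrt h2a
  have hLR : L ≤ R := sqrt_le_sqrt (max_le h2a (by linarith))
  have hcubicL : L^3 + 3*a*L = 0 := by
    rcases le_total a 0 with h | h
    · have : L^2 = -3*a := by rw [hL, max_eq_right (by linarith)]
      linear_combination L * this
    · have : L = 0 := by simp only [L, max_eq_left (by linarith : -3*a ≤ 0), sqrt_zero]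
      simp [this]
  have hcubicR : b ≤ R^3 + 3*a*R := by
    have hbR : b^2 ≤ ((1 + a)*R)^2 := by rw [mul_pow, hR]; exact hb
    have := abs_le_of_sq_le_sq' hbR (mul_nonneg (by linarith) (sqrt_nonneg _))
    linear_combination this.2 - R * hR
  obtain ⟨r, ⟨hLr, hrR⟩, hr⟩ := intermediate_value_Icc hLR
    (by fun_prop : Continuous fun r : ℝ => r^3 + 3*a*r).continuousOn
    ⟨hcubicL ▸ hb₀, hcubicR⟩
  have hLr2 : L^2 ≤ r^2 := pow_le_pow_left₀ hL₀ hLr 2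
  have hrR2 : r^2 ≤ R^2 := pow_le_pow_left₀ (hL₀.trans hLr) hrR 2
  exact ⟨r, hr, by linarith [le_max_right 0 (-3*a)], hR ▸ hrR2⟩

lemma quartic_nonneg_of_sq_le {a b : ℝ} (ha : -1 ≤ a) (hb : b^2 ≤ (1 + a)^2 * (1 - 2*a)) :
    ∀ t, 0 ≤ quartic a b t := by
  wlog hb₀ : 0 ≤ b generalizing b
  · exact quartic_nonneg_iff_neg.1 (this (by rwa [neg_sq]) (by linarith))
  obtain ⟨r, rfl, h₁, h₂⟩ := exists_cubic_eq_of_sq_le ha hb₀ hb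
  exact quartic_cubic_nonneg h₁ h₂

lemma le_half_of_quartic_nonneg {a b : ℝ} (hg : ∀ t, 0 ≤ quartic a b t) : a ≤ 1/2 := by
  by_contra! ha
  set c := 6*a - 3
  have hc : 0 < c := by linarith
  set t := 1 + 4/c
  have ht : c*t = c + 4 := by simp only [t]; field_simp
  have ht1 : 1 < t := lt_add_of_pos_right 1 (by positivity)
  -- `c t² ≥ c t = c + 4`, so the even part of `g` is at most `1 - t² < 0`
  have hsum : quartic a b t + quartic a b (-t) = 2*(1 + (c + 3)*t^2 - c*t^4) := by
    unfold quartic; ring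
  nlinarith [hg t, hg (-t), mul_le_mul_of_nonneg_left ht1.le (by positivity : 0 ≤ c*t^2)]

lemma pow_four_mul_quartic_neg_inv {a b R : ℝ} (hR : R^2 = 1 - 2*a) (hR₀ : R ≠ 0) :
    R^4 * quartic a b (-1/R) = 4*R*((1 + a)*R - b) := by
  unfold quartic
  field_simp
  linear_combination (R^2 - 3) * hR

lemma le_of_quartic_nonneg {a b : ℝ} (hg : ∀ t, 0 ≤ quartic a b t) (ha : a < 1/2) :
    b ≤ (1 + a) * √(1 - 2*a) := by
  have hR₀ : 0 < √(1 - 2*a) := sqrt_pos.2 (by linarith)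
  have h := mul_nonneg (by positivity : 0 ≤ √(1 - 2*a)^4) (hg (-1/√(1 - 2*a)))
  rw [pow_four_mul_quartic_neg_inv (sq_sqrt (by linarith)) hR₀.ne',
    mul_nonneg_iff_of_pos_left (by positivity)] at h
  linarith

lemma eq_zero_of_quartic_half_nonneg {b : ℝ} (hg : ∀ t, 0 ≤ quartic (1/2) b t) : b = 0 := by
  by_contra hb
  set k := 1 + b^2
  have hk : b^2 * quartic (1/2) b (-k/b) = b^2 - k^2*(4*k - 3) := by
    unfold quartic; field_simp; ring
  nlinarith [mul_nonneg (sq_nonneg b) (hg (-k/b)), sq_nonneg b, mul_nonneg (sq_nonneg b) (sq_nonneg k)]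

lemma sq_le_of_quartic_nonneg {a b : ℝ} (hg : ∀ t, 0 ≤ quartic a b t) :
    -1 ≤ a ∧ b^2 ≤ (1 + a)^2 * (1 - 2*a) := by
  rcases (le_half_of_quartic_nonneg hg).lt_or_eq with ha | rfl
  · have h₁ := le_of_quartic_nonneg hg ha
    have h₂ := le_of_quartic_nonneg (quartic_nonneg_iff_neg.2 hg) ha
    have hR₀ : 0 < √(1 - 2*a) := sqrt_pos.2 (by linarith)
    have h1a : 0 ≤ 1 + a := (mul_nonneg_iff_of_pos_right hR₀).1 (by linarith)
    refine ⟨by linarith, ?_⟩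
    calc b^2 ≤ ((1 + a) * √(1 - 2*a))^2 := sq_le_sq' (by linarith) h₁
      _ = (1 + a)^2 * (1 - 2*a) := by rw [mul_pow, sq_sqrt (by linarith)]
  · norm_num [eq_zero_of_quartic_half_nonneg hg]

theorem stmt_0 (a b : ℝ) :
    (∀ t : ℝ, 0 ≤ (3 - 6*a)*t^4 + 4*b*t^3 + 6*a*t^2 + 1) ↔
      (a ≥ -1 ∧ b^2 ≤ 1 - 2*a^3 - 3*a^2) := by
  change (∀ t, 0 ≤ quartic a b t) ↔ _
  rw [show 1 - 2*a^3 - 3*a^2 = (1 + a)^2 * (1 - 2*a) by ring]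
  exact ⟨sq_le_of_quartic_nonneg, fun ⟨ha, hb⟩ => quartic_nonneg_of_sq_le ha hb⟩
end

section
/- A homogeneous cubic p(x1,x2) = x1^3 + 3a x1 x2^2 + b x2^3 satisfies p(x) ≤ 1 for all (x1,x2) with x1^2 + x2^2 = 1 if and only if a ≥ -1 and b^2 ≤ 1 - 2a^3 - 3a^2. -/
open Set

/-!
On the circle put `x₁ = t ∈ [-1, 1]` and `x₂ = ±√(1 - t²)`. Then `1 - p = g(t) ∓ b (1 - t²)^(3/2)`
with `g(t) = (1 - t) h(t)`, so `p ≤ 1` on the circle iff `g ≥ 0` and `b² (1 - t²)³ ≤ g²`, that is,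
for `t < 1`, iff `h ≥ 0` and `Q := h² - b² (1 - t) (1 + t)³ ≥ 0` (`h = circleGap a`,
`Q = circleDiscr a b`). Now
`Q(t) = ((1 - a) t - a)² R(t) + (1 - 2a³ - 3a² - b²) (1 - t) (1 + t)³` with `R ≥ 0` on `[-1, 1]`
when `-1 ≤ a ≤ 1/2`, which gives sufficiency. Conversely `h(-1/2) ≥ 0` and (in the limit) `h(1) ≥ 0`
give `-1 ≤ a ≤ 1/2`, and evaluating `Q` at its double root `t = a / (1 - a)` bounds `b²`; when
`a = 1/2` that root is `t = 1` and one divides `Q` by `1 - t` before letting `t → 1`.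
-/

theorem le_of_forall_Ico_le {α β : Type*} [TopologicalSpace α] [LinearOrder α] [OrderTopology α]
    [DenselyOrdered α] [TopologicalSpace β] [Preorder β] [OrderClosedTopology β] {f g : α → β}
    (hf : Continuous f) (hg : Continuous g) {c d : α} (hcd : c < d)
    (h : ∀ t ∈ Ico c d, f t ≤ g t) : f d ≤ g d :=
  (isClosed_le hf hg).closure_subset_iff.2 h (closure_Ico hcd.ne ▸ right_mem_Icc.2 hcd.le)

def circleGap (a t : ℝ) : ℝ := (1 - 3 * a) * (t ^ 2 + t) + 1

def circleDiscr (a b t : ℝ) : ℝ := circleGap a t ^ 2 - b ^ 2 * (1 - t) * (1 + t) ^ 3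

theorem one_sub_cubic_eq {a b x₁ x₂ : ℝ} (hx : x₁ ^ 2 + x₂ ^ 2 = 1) :
    1 - (x₁ ^ 3 + 3 * a * x₁ * x₂ ^ 2 + b * x₂ ^ 3) = (1 - x₁) * circleGap a x₁ - b * x₂ ^ 3 := by
  rw [circleGap]; linear_combination (-3 * a * x₁) * hx

theorem sq_circleGap_sub {a b x₁ x₂ : ℝ} (hx : x₁ ^ 2 + x₂ ^ 2 = 1) :
    ((1 - x₁) * circleGap a x₁) ^ 2 - (b * x₂ ^ 3) ^ 2 = (1 - x₁) ^ 2 * circleDiscr a b x₁ := by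
  have : x₂ ^ 2 = (1 - x₁) * (1 + x₁) := by linear_combination hx
  rw [circleDiscr, show (b * x₂ ^ 3) ^ 2 = b ^ 2 * (x₂ ^ 2) ^ 3 by ring, this]; ring

theorem circleDiscr_eq (a b t : ℝ) :
    circleDiscr a b t = ((1 - a) * t - a) ^ 2 * (2 * (1 - a) * t ^ 2 + 4 * t + 3 + 2 * a)
      + (1 - 2 * a ^ 3 - 3 * a ^ 2 - b ^ 2) * ((1 - t) * (1 + t) ^ 3) := by
  rw [circleDiscr, circleGap]; ring

theorem circleGap_nonneg {a t : ℝ} (ha : -1 ≤ a) (ha' : a ≤ 1 / 2) (ht : t ∈ Icc (-1 : ℝ) 1) :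
    0 ≤ circleGap a t := by
  obtain ⟨ht₀, ht₁⟩ := ht
  rw [circleGap]
  nlinarith [sq_nonneg (t + 1 / 2), mul_nonneg (sub_nonneg.2 ht₁) (by linarith : (0 : ℝ) ≤ t + 2)]

theorem le_half_of_sq_le {a b : ℝ} (hb : b ^ 2 ≤ 1 - 2 * a ^ 3 - 3 * a ^ 2) :
    a ≤ 1 / 2 := by
  nlinarith [sq_nonneg b, sq_nonneg (1 + a)]

theorem circleDiscr_nonneg {a b t : ℝ} (ha : -1 ≤ a) (hb : b ^ 2 ≤ 1 - 2 * a ^ 3 - 3 * a ^ 2)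
    (ht : t ∈ Icc (-1 : ℝ) 1) : 0 ≤ circleDiscr a b t := by
  obtain ⟨ht₀, ht₁⟩ := ht
  have ha' := le_half_of_sq_le hb
  have hR : 0 ≤ 2 * (1 - a) * t ^ 2 + 4 * t + 3 + 2 * a := by
    nlinarith [sq_nonneg (2 * (1 - a) * t + 2),
      mul_nonneg (by linarith : (0 : ℝ) ≤ 1 + a) (by linarith : (0 : ℝ) ≤ 1 - 2 * a)]
  rw [circleDiscr_eq]
  have : 0 ≤ (1 - t) * (1 + t) ^ 3 := mul_nonneg (by linarith) (pow_nonneg (by linarith) 3)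
  have : 0 ≤ 1 - 2 * a ^ 3 - 3 * a ^ 2 - b ^ 2 := by linarith
  positivity

theorem cubic_le_one_of {a b x₁ x₂ : ℝ} (ha : -1 ≤ a) (hb : b ^ 2 ≤ 1 - 2 * a ^ 3 - 3 * a ^ 2)
    (hx : x₁ ^ 2 + x₂ ^ 2 = 1) : x₁ ^ 3 + 3 * a * x₁ * x₂ ^ 2 + b * x₂ ^ 3 ≤ 1 := by
  have ht : x₁ ∈ Icc (-1 : ℝ) 1 := by constructor <;> nlinarith [sq_nonneg x₂]
  have hg : 0 ≤ (1 - x₁) * circleGap a x₁ :=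
    mul_nonneg (sub_nonneg.2 ht.2) (circleGap_nonneg ha (le_half_of_sq_le hb) ht)
  have hsq : (b * x₂ ^ 3) ^ 2 ≤ ((1 - x₁) * circleGap a x₁) ^ 2 := by
    have := mul_nonneg (sq_nonneg (1 - x₁)) (circleDiscr_nonneg ha hb ht)
    rw [← sq_circleGap_sub hx] at this
    linarith
  linarith [(abs_le_of_sq_le_sq' hsq hg).2, one_sub_cubic_eq (a := a) (b := b) hx]

theorem circleGap_nonneg_and_circleDiscr_nonneg_of {a b : ℝ}
    (H : ∀ x₁ x₂ : ℝ, x₁ ^ 2 + x₂ ^ 2 = 1 → x₁ ^ 3 + 3 * a * x₁ * x₂ ^ 2 + b * x₂ ^ 3 ≤ 1)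
    {t : ℝ} (ht : t ∈ Ico (-1 : ℝ) 1) : 0 ≤ circleGap a t ∧ 0 ≤ circleDiscr a b t := by
  obtain ⟨ht₀, ht₁⟩ := ht
  set s := √(1 - t ^ 2)
  have hs : t ^ 2 + s ^ 2 = 1 := by rw [Real.sq_sqrt (by nlinarith)]; ring
  have hplus := H t s hs
  have hminus := H t (-s) (by rwa [neg_sq])
  rw [← sub_nonneg, one_sub_cubic_eq hs] at hplus
  rw [← sub_nonneg, one_sub_cubic_eq (by rwa [neg_sq]), Odd.neg_pow (by decide)] at hminus
  have h₁ : 0 < 1 - t := sub_pos.2 ht₁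
  constructor
  · exact nonneg_of_mul_nonneg_right (by linarith) h₁
  · have hsq := sq_le_sq' (by linarith) (by linarith : b * s ^ 3 ≤ (1 - t) * circleGap a t)
    rw [← sub_nonneg, sq_circleGap_sub hs] at hsq
    exact nonneg_of_mul_nonneg_right hsq (by positivity)

theorem sq_le_of_circleDiscr_nonneg {a b : ℝ} (ha : a < 1 / 2)
    (h : ∀ t ∈ Ico (-1 : ℝ) 1, 0 ≤ circleDiscr a b t) : b ^ 2 ≤ 1 - 2 * a ^ 3 - 3 * a ^ 2 := by
  have h₁ : 0 < 1 - a := by linarith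
  set t := a / (1 - a) with ht
  have hroot : (1 - a) * t - a = 0 := by rw [ht]; field_simp; ring
  have hpos : 0 < 1 + t := by rw [ht]; field_simp; linarith
  have hlt : 0 < 1 - t := by rw [ht]; field_simp; linarith
  have := h t ⟨by linarith, by linarith⟩
  rw [circleDiscr_eq, hroot] at this
  norm_num at this
  exact sub_nonneg.1 (nonneg_of_mul_nonneg_left this (by positivity))

theorem sq_nonpos_of_circleDiscr_half_nonneg {b : ℝ}
    (h : ∀ t ∈ Ico (-1 : ℝ) 1, 0 ≤ circleDiscr (1 / 2) b t) : b ^ 2 ≤ 0 := by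
  have hf : ∀ t ∈ Ico (-1 : ℝ) 1, 0 ≤ (1 - t) * (2 + t) ^ 2 / 4 - b ^ 2 * (1 + t) ^ 3 := by
    intro t ht
    have hfac : circleDiscr (1 / 2) b t
        = (1 - t) * ((1 - t) * (2 + t) ^ 2 / 4 - b ^ 2 * (1 + t) ^ 3) := by
      rw [circleDiscr, circleGap]; ring
    exact nonneg_of_mul_nonneg_right (hfac ▸ h t ht) (sub_pos.2 ht.2)
  have := le_of_forall_Ico_le continuous_const (by fun_prop) (by norm_num : (-1 : ℝ) < 1) hf
  norm_num at this
  linarith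

theorem stmt_1 (a b : ℝ) :
    (∀ x1 x2 : ℝ, x1^2 + x2^2 = 1 → x1^3 + 3*a*x1*x2^2 + b*x2^3 ≤ 1) ↔
      (a ≥ -1 ∧ b^2 ≤ 1 - 2*a^3 - 3*a^2) := by
  refine ⟨fun H => ?_, fun ⟨ha, hb⟩ _ _ hx => cubic_le_one_of ha hb hx⟩
  have hH := fun t (ht : t ∈ Ico (-1 : ℝ) 1) => circleGap_nonneg_and_circleDiscr_nonneg_of H ht
  have ha : -1 ≤ a := by
    have := (hH (-1 / 2) ⟨by norm_num, by norm_num⟩).1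
    rw [circleGap] at this
    linarith
  have ha' : a ≤ 1 / 2 := by
    have := le_of_forall_Ico_le continuous_const (by unfold circleGap; fun_prop)
      (by norm_num : (-1 : ℝ) < 1) fun t ht => (hH t ht).1
    rw [circleGap] at this
    linarith
  refine ⟨ha, ?_⟩
  rcases ha'.lt_or_eq with ha' | rfl
  · exact sq_le_of_circleDiscr_nonneg ha' fun t ht => (hH t ht).2
  · exact (sq_nonpos_of_circleDiscr_half_nonneg fun t ht => (hH t ht).2).trans (by norm_num)
end

section
/- For real parameters a ≤ 1/2 and b, there exists α ∈ ℝ such that the symmetric 3×3 matrix M(α) with rows (3-6a, 2b, α), (2b, 6a-2α, 0), (α, 0, 1) is positive semidefinite if and only if M(2a-1) is positive semidefinite. -/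
/-!
Eliminating the last coordinate (the Schur complement of the entry `1`), `M(α)` is positive
semidefinite iff `3 - 6a - α² ≥ 0`, `6a - 2α ≥ 0` and `4b² ≤ (3 - 6a - α²)(6a - 2α)`.
These force `-1 ≤ a` and `α ≤ 3a ≤ 2 - a`, and on that range the cubic `(3 - 6a - α²)(6a - 2α)`
is largest at its critical point `α = 2a - 1`.
-/

open Matrix

lemma binary_quadratic_nonneg_iff {p y w : ℝ} :
    (∀ s t : ℝ, 0 ≤ p * s ^ 2 + 2 * y * s * t + w * t ^ 2) ↔ 0 ≤ p ∧ 0 ≤ w ∧ y ^ 2 ≤ p * w := by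
  constructor
  · intro h
    have hp : 0 ≤ p := by simpa using h 1 0
    have hw : 0 ≤ w := by simpa using h 0 1
    refine ⟨hp, hw, ?_⟩
    by_contra! hneg
    have hw0 : w = 0 := by nlinarith [h w (-y)]
    have hp0 : p = 0 := by nlinarith [h y (-p)]
    nlinarith [h 1 (-y)]
  · rintro ⟨hp, hw, hy⟩ s t
    rcases hp.eq_or_lt with rfl | hp
    · obtain rfl : y = 0 := by nlinarith
      nlinarith
    · have : 0 ≤ p * (p * s ^ 2 + 2 * y * s * t + w * t ^ 2) := by
        nlinarith [sq_nonneg (p * s + y * t), mul_nonneg (sub_nonneg.2 hy) (sq_nonneg t)]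
      exact nonneg_of_mul_nonneg_right this hp

lemma posSemidef_arrowhead_iff (x y z w : ℝ) :
    (!![x, y, z; y, w, 0; z, 0, 1] : Matrix (Fin 3) (Fin 3) ℝ).PosSemidef ↔
      0 ≤ x - z ^ 2 ∧ 0 ≤ w ∧ y ^ 2 ≤ (x - z ^ 2) * w := by
  have hform (v : Fin 3 → ℝ) : star v ⬝ᵥ (!![x, y, z; y, w, 0; z, 0, 1] *ᵥ v) =
      (v 2 + z * v 0) ^ 2 + ((x - z ^ 2) * v 0 ^ 2 + 2 * y * v 0 * v 1 + w * v 1 ^ 2) := by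
    simp only [star_trivial, dotProduct, mulVec, Fin.sum_univ_three, of_apply, cons_val',
      cons_val_zero, cons_val_one, cons_val, cons_val_fin_one, zero_mul, add_zero, one_mul]
    ring
  have hherm : (!![x, y, z; y, w, 0; z, 0, 1] : Matrix (Fin 3) (Fin 3) ℝ).IsHermitian := by
    ext i j
    fin_cases i <;> fin_cases j <;> rfl
  rw [posSemidef_iff_dotProduct_mulVec, ← binary_quadratic_nonneg_iff]
  simp only [hform, hherm, true_and]
  constructor
  · intro h s t
    simpa using h ![s, t, -z * s]
  · intro h v
    exact add_nonneg (sq_nonneg _) (h _ _)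

/-- The difference of the two sides is `2 (α - (2a - 1))² (2 - a - α)`, and `α ≤ 3a ≤ 2 - a`. -/
lemma diag_prod_le_at_two_mul_sub_one {a α : ℝ} (ha : a ≤ 1 / 2) (hα : α ≤ 3 * a) :
    (3 - 6 * a - α ^ 2) * (6 * a - 2 * α) ≤
      (3 - 6 * a - (2 * a - 1) ^ 2) * (6 * a - 2 * (2 * a - 1)) := by
  have hdiff : (3 - 6 * a - (2 * a - 1) ^ 2) * (6 * a - 2 * (2 * a - 1)) -
      (3 - 6 * a - α ^ 2) * (6 * a - 2 * α) = 2 * (α - (2 * a - 1)) ^ 2 * (2 - a - α) := by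
    ring
  linarith [mul_nonneg (sq_nonneg (α - (2 * a - 1))) (by linarith : (0 : ℝ) ≤ 2 - a - α)]

lemma neg_one_le_of_sq_le {a α : ℝ} (hα : α ≤ 3 * a) (hsq : 0 ≤ 3 - 6 * a - α ^ 2) : -1 ≤ a := by
  by_contra! ha
  nlinarith

theorem stmt_2 (a b : ℝ) (ha : a ≤ 1/2) :
    (∃ α : ℝ, (!![3 - 6*a, 2*b, α; 2*b, 6*a - 2*α, 0; α, 0, 1] : Matrix (Fin 3) (Fin 3) ℝ).PosSemidef) ↔
      (!![3 - 6*a, 2*b, 2*a - 1; 2*b, 6*a - 2*(2*a - 1), 0; 2*a - 1, 0, 1] : Matrix (Fin 3) (Fin 3) ℝ).PosSemidef := by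
  simp only [posSemidef_arrowhead_iff]
  refine ⟨fun ⟨α, hx, hw, hy⟩ ↦ ?_, fun h ↦ ⟨2 * a - 1, h⟩⟩
  have hα : α ≤ 3 * a := by linarith
  have ha' : -1 ≤ a := neg_one_le_of_sq_le hα hx
  exact ⟨by nlinarith, by linarith, hy.trans (diag_prod_le_at_two_mul_sub_one ha hα)⟩
end

section
/- For every τ ∈ [-√3/2, √3/2], the pair (a, b) = ((1-4τ^2)/2, 3τ - 4τ^3) satisfies a ≥ -1 and b^2 = 1 - 2a^3 - 3a^2. In particular the cubic p(x) = x1^3 + (3/2)(1-4τ^2) x1 x2^2 + (3τ - 4τ^3) x2^3 lies on the boundary of the set of cubics bounded by 1 on the unit circle. -/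
/-! On the unit circle, `1 - p` factors as `(1 - x₁) ℓ₁ ℓ₂` with affine forms
`ℓ₁ = 1 + 4τ² - (1 - 4τ²) x₁ - 4τ x₂` and `ℓ₂ = 1 + x₁/2 + τ x₂`. Each factor has the shape
`c - (u x₁ + v x₂)` with `u² + v² ≤ c²`, hence is nonnegative by Cauchy–Schwarz; for `ℓ₁` this holds
since `(1 - 4τ²)² + (4τ)² = (1 + 4τ²)²`, and for `ℓ₂` it is exactly the constraint `τ² ≤ 3/4`.
The bound is attained at `(1, 0)`. -/

lemma mul_add_mul_le_of_sq_add_sq_le {x y u v c : ℝ} (hxy : x ^ 2 + y ^ 2 = 1)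
    (huv : u ^ 2 + v ^ 2 ≤ c ^ 2) (hc : 0 ≤ c) : u * x + v * y ≤ c := by
  have cauchy_schwarz : (u * x + v * y) ^ 2 ≤ c ^ 2 := by
    nlinarith [sq_nonneg (u * y - v * x)]
  exact abs_le_of_sq_le_sq' cauchy_schwarz hc |>.2

lemma sq_le_of_mem_Icc_sqrt_three_div_two {τ : ℝ}
    (hτ : τ ∈ Set.Icc (-(Real.sqrt 3) / 2) (Real.sqrt 3 / 2)) : τ ^ 2 ≤ 3 / 4 := by
  have h := sq_le_sq' (by linarith [hτ.1]) hτ.2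
  rw [div_pow, Real.sq_sqrt (by norm_num)] at h
  linarith

lemma one_sub_cubic_eq_mul_of_sq_add_sq {τ x y : ℝ} (hxy : x ^ 2 + y ^ 2 = 1) :
    1 - (x^3 + (3/2)*(1 - 4*τ^2)*x*y^2 + (3*τ - 4*τ^3)*y^3) =
      (1 - x) * (1 + 4*τ^2 - ((1 - 4*τ^2)*x + 4*τ*y)) * (1 + x/2 + τ*y) := by
  linear_combination (4*τ^3*y - 3*τ*y + 2*τ^2*x - (3/2)*x + 4*τ^2) * hxy

lemma cubic_le_one_of_sq_add_sq {τ x y : ℝ} (hτ : τ ^ 2 ≤ 3 / 4) (hxy : x ^ 2 + y ^ 2 = 1) :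
    x^3 + (3/2)*(1 - 4*τ^2)*x*y^2 + (3*τ - 4*τ^3)*y^3 ≤ 1 := by
  have hx : 1 * x + 0 * y ≤ 1 := mul_add_mul_le_of_sq_add_sq_le hxy (by norm_num) zero_le_one
  have hℓ₁ : (1 - 4*τ^2)*x + 4*τ*y ≤ 1 + 4*τ^2 :=
    mul_add_mul_le_of_sq_add_sq_le hxy (le_of_eq (by ring)) (by positivity)
  have hℓ₂ : (-1/2)*x + (-τ)*y ≤ 1 :=
    mul_add_mul_le_of_sq_add_sq_le hxy (by linarith) zero_le_one
  have h := one_sub_cubic_eq_mul_of_sq_add_sq (τ := τ) hxy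
  have hprod : 0 ≤ (1 - x) * (1 + 4*τ^2 - ((1 - 4*τ^2)*x + 4*τ*y)) * (1 + x/2 + τ*y) := by
    apply mul_nonneg (mul_nonneg _ _) _ <;> linarith
  linarith

theorem stmt_3 (τ : ℝ) (hτ : τ ∈ Set.Icc (-(Real.sqrt 3)/2) (Real.sqrt 3/2)) :
    ((1 - 4*τ^2)/2 ≥ -1 ∧ (3*τ - 4*τ^3)^2 = 1 - 2*((1 - 4*τ^2)/2)^3 - 3*((1 - 4*τ^2)/2)^2) ∧
    (∀ x1 x2 : ℝ, x1^2 + x2^2 = 1 →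
      x1^3 + (3/2)*(1 - 4*τ^2)*x1*x2^2 + (3*τ - 4*τ^3)*x2^3 ≤ 1) ∧
    (∃ x1 x2 : ℝ, x1^2 + x2^2 = 1 ∧
      x1^3 + (3/2)*(1 - 4*τ^2)*x1*x2^2 + (3*τ - 4*τ^3)*x2^3 = 1) := by
  have hτ2 := sq_le_of_mem_Icc_sqrt_three_div_two hτ
  exact ⟨⟨by linarith, by ring⟩, fun _ _ => cubic_le_one_of_sq_add_sq hτ2,
    ⟨1, 0, by norm_num, by norm_num⟩⟩
end

section
/- Let p be a homogeneous cubic on ℝ^2 with max over the unit circle equal to 1, and suppose p has at least three distinct global maxima on S^1. Then p has exactly three global maxima on S^1 and they are equally spaced (pairwise at angle 2π/3); moreover p(x) = cos(3(φ - φ0)) in polar coordinates for some φ0. -/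
/-
On the unit circle the cubic is `Re (α z³ + β z)` with `z = x₁ + i x₂`. Since `z̄ = z⁻¹` there,
`z³ (2 Re (α z³ + β z) - 2)` is the value at `z` of `P = α X⁶ + β X⁴ - 2 X³ + β̄ X² + ᾱ`, and a
point where the maximum `1` is attained is a double root of `P`. Three distinct double roots
make `P` a constant times a square of a cubic; as `P` has no `X⁵` and no `X` term,
`P = k (X³ + c)²`. Comparing coefficients gives `β = 0` and `|α| = 1`, i.e.
`p = cos (3 (φ - φ₀))` on the circle.
-/

open Polynomial ComplexConjugate

namespace Polynomial

variable {K : Type*} [Field K]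

theorem eq_C_leadingCoeff_mul_sq_of_sq_dvd {P : K[X]} {z₁ z₂ z₃ : K}
    (h₁₂ : z₁ ≠ z₂) (h₁₃ : z₁ ≠ z₃) (h₂₃ : z₂ ≠ z₃)
    (hd₁ : (X - C z₁) ^ 2 ∣ P) (hd₂ : (X - C z₂) ^ 2 ∣ P) (hd₃ : (X - C z₃) ^ 2 ∣ P)
    (hdeg : P.natDegree ≤ 6) :
    P = C P.leadingCoeff * ((X - C z₁) * (X - C z₂) * (X - C z₃)) ^ 2 := by
  have cop : ∀ {a b : K}, a ≠ b → IsCoprime ((X - C a) ^ 2) ((X - C b) ^ 2) := fun h =>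
    (isCoprime_X_sub_C_of_isUnit_sub (sub_ne_zero.mpr h).isUnit).pow
  have hdvd : ((X - C z₁) * (X - C z₂) * (X - C z₃)) ^ 2 ∣ P := by
    rw [mul_pow, mul_pow]
    exact ((cop h₁₃).mul_left (cop h₂₃)).mul_dvd ((cop h₁₂).mul_dvd hd₁ hd₂) hd₃
  have hmonic : (((X - C z₁) * (X - C z₂) * (X - C z₃)) ^ 2).Monic := by monicity!
  refine eq_leadingCoeff_mul_of_monic_of_dvd_of_natDegree_le hmonic hdvd (hdeg.trans ?_)
  exact ge_of_eq (by compute_degree!)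

/-- The hypotheses force `P = k (X³ + c)²`. -/
theorem coeff_eq_of_three_sq_dvd [CharZero K] {P : K[X]} {z₁ z₂ z₃ : K}
    (h₁₂ : z₁ ≠ z₂) (h₁₃ : z₁ ≠ z₃) (h₂₃ : z₂ ≠ z₃)
    (hd₁ : (X - C z₁) ^ 2 ∣ P) (hd₂ : (X - C z₂) ^ 2 ∣ P) (hd₃ : (X - C z₃) ^ 2 ∣ P)
    (hdeg : P.natDegree ≤ 6) (h₅ : P.coeff 5 = 0) (h₁ : P.coeff 1 = 0) (h₃ : P.coeff 3 ≠ 0) :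
    P.coeff 4 = 0 ∧ P.coeff 2 = 0 ∧ P.coeff 3 ^ 2 = 4 * P.coeff 6 * P.coeff 0 := by
  have hP := eq_C_leadingCoeff_mul_sq_of_sq_dvd h₁₂ h₁₃ h₂₃ hd₁ hd₂ hd₃ hdeg
  set k := P.leadingCoeff
  set e₁ := z₁ + z₂ + z₃
  set e₂ := z₁ * z₂ + z₁ * z₃ + z₂ * z₃
  set e₃ := z₁ * z₂ * z₃
  have hexp : C k * ((X - C z₁) * (X - C z₂) * (X - C z₃)) ^ 2 =
      C k * X ^ 6 + C (-2 * k * e₁) * X ^ 5 + C (k * (e₁ ^ 2 + 2 * e₂)) * X ^ 4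
      + C (-2 * k * (e₃ + e₁ * e₂)) * X ^ 3 + C (k * (e₂ ^ 2 + 2 * e₁ * e₃)) * X ^ 2
      + C (-2 * k * e₂ * e₃) * X + C (k * e₃ ^ 2) := by
    simp only [e₁, e₂, e₃, map_mul, map_add, map_neg, map_pow, map_ofNat]
    ring
  have hcoeff (n : ℕ) := congrArg (coeff · n) (hP.trans hexp)
  simp only [coeff_add, coeff_C_mul, coeff_X_pow, coeff_X, coeff_C] at hcoeff
  have c₀ := hcoeff 0
  have c₁ := hcoeff 1
  have c₂ := hcoeff 2
  have c₃ := hcoeff 3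
  have c₄ := hcoeff 4
  have c₅ := hcoeff 5
  have c₆ := hcoeff 6
  norm_num at c₀ c₁ c₂ c₃ c₄ c₅ c₆
  rw [c₃] at h₃ ⊢
  rw [c₁] at h₁
  rw [c₅] at h₅
  have hk : k ≠ 0 := by rintro hk; simp [hk] at h₃
  have he₁ : e₁ = 0 := by simpa [hk] using h₅
  have he₃ : e₃ ≠ 0 := by rintro he₃; simp [he₁, he₃] at h₃
  have he₂ : e₂ = 0 := by simpa [hk, he₃] using h₁
  refine ⟨?_, ?_, ?_⟩
  · rw [c₄, he₁, he₂]; ring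
  · rw [c₂, he₁, he₂]; ring
  · rw [c₆, c₀, he₁]; ring

end Polynomial

noncomputable def cubicCirclePoly (α β : ℂ) : ℂ[X] :=
  C α * X ^ 6 + C β * X ^ 4 - C 2 * X ^ 3 + C (conj β) * X ^ 2 + C (conj α)

section CubicCirclePoly

open Complex

variable {α β z : ℂ}

theorem coeff_cubicCirclePoly_three : (cubicCirclePoly α β).coeff 3 = -2 := by
  simp [cubicCirclePoly, coeff_X_pow]

theorem eval_cubicCirclePoly (hz : ‖z‖ = 1) :
    (cubicCirclePoly α β).eval z = z ^ 3 * (2 * (α * z ^ 3 + β * z).re - 2) := by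
  have hz' : conj z * z = 1 := by rw [conj_mul', hz]; norm_num
  rw [re_eq_add_conj]
  simp only [cubicCirclePoly, eval_add, eval_sub, eval_mul, eval_pow, eval_C, eval_X, map_add,
    map_mul, map_pow]
  linear_combination (-(conj α) * ((conj z * z) ^ 2 + conj z * z + 1) - conj β * z ^ 2) * hz'

theorem mul_eval_derivative_cubicCirclePoly (hz : ‖z‖ = 1) :
    z * (derivative (cubicCirclePoly α β)).eval z =
      z ^ 3 * (6 * ((α * z ^ 3 + β * z).re - 1) + 2 * I * (3 * α * z ^ 3 + β * z).im) := by
  have hz' : conj z * z = 1 := by rw [conj_mul', hz]; norm_num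
  rw [re_eq_add_conj, im_eq_sub_conj]
  simp only [cubicCirclePoly, derivative_add, derivative_sub, derivative_C_mul_X_pow,
    derivative_C, add_zero]
  simp only [eval_add, eval_sub, eval_mul, eval_pow, eval_C, eval_X, map_add, map_mul, map_pow,
    map_ofNat, eval_ofNat]
  field_simp
  linear_combination (-4 * conj β * z ^ 2) * hz'

/-- `-Im (3 α z³ + β z)` is the derivative of `t ↦ Re (α (z eᶦᵗ)³ + β z eᶦᵗ)` at its maximum
`t = 0`. -/
theorem im_eq_zero_of_max_on_circle (hle : ∀ w : ℂ, ‖w‖ = 1 → (α * w ^ 3 + β * w).re ≤ 1)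
    (hz : ‖z‖ = 1) (hmax : (α * z ^ 3 + β * z).re = 1) : (3 * α * z ^ 3 + β * z).im = 0 := by
  set e : ℂ → ℂ := fun s => α * (z * exp (s * I)) ^ 3 + β * (z * exp (s * I))
  have hrot : HasDerivAt (fun s => z * exp (s * I)) (z * I) ((0 : ℝ) : ℂ) := by
    simpa using (((hasDerivAt_id ((0 : ℝ) : ℂ)).mul_const I).cexp).const_mul z
  have he : HasDerivAt e ((3 * α * z ^ 3 + β * z) * I) ((0 : ℝ) : ℂ) :=
    (((hrot.fun_pow 3).const_mul α).add (hrot.const_mul β)).congr_deriv (by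
      simp only [Nat.cast_ofNat, ofReal_zero, zero_mul, exp_zero, mul_one, Nat.add_one_sub_one]
      ring)
  have hloc : IsLocalMax (fun t : ℝ => (e t).re) 0 := by
    refine Filter.Eventually.of_forall fun t => ?_
    simp only [e, ofReal_zero, zero_mul, Complex.exp_zero, mul_one, hmax]
    exact hle _ (by rw [norm_mul, norm_exp_ofReal_mul_I, hz, mul_one])
  have := hloc.hasDerivAt_eq_zero he.real_of_complex
  rwa [mul_I_re, neg_eq_zero] at this

theorem sq_dvd_cubicCirclePoly (hle : ∀ w : ℂ, ‖w‖ = 1 → (α * w ^ 3 + β * w).re ≤ 1)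
    (hz : ‖z‖ = 1) (hmax : (α * z ^ 3 + β * z).re = 1) :
    (X - C z) ^ 2 ∣ cubicCirclePoly α β := by
  have hP : cubicCirclePoly α β ≠ 0 := fun h => by
    simpa [h] using coeff_cubicCirclePoly_three (α := α) (β := β)
  rw [← le_rootMultiplicity_iff hP, Nat.succ_le_iff, one_lt_rootMultiplicity_iff_isRoot hP]
  refine ⟨by simp [IsRoot, eval_cubicCirclePoly hz, hmax], ?_⟩
  have hz₀ : z ≠ 0 := norm_ne_zero_iff.mp (by rw [hz]; exact one_ne_zero)
  have h := mul_eval_derivative_cubicCirclePoly (α := α) (β := β) hz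
  rw [hmax, im_eq_zero_of_max_on_circle hle hz hmax] at h
  simpa [hz₀] using h

end CubicCirclePoly

theorem eq_zero_and_norm_eq_one_of_three_maxima {α β z₁ z₂ z₃ : ℂ}
    (hle : ∀ w : ℂ, ‖w‖ = 1 → (α * w ^ 3 + β * w).re ≤ 1)
    (hz₁ : ‖z₁‖ = 1) (hz₂ : ‖z₂‖ = 1) (hz₃ : ‖z₃‖ = 1)
    (h₁₂ : z₁ ≠ z₂) (h₁₃ : z₁ ≠ z₃) (h₂₃ : z₂ ≠ z₃)
    (hmax₁ : (α * z₁ ^ 3 + β * z₁).re = 1) (hmax₂ : (α * z₂ ^ 3 + β * z₂).re = 1)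
    (hmax₃ : (α * z₃ ^ 3 + β * z₃).re = 1) :
    β = 0 ∧ ‖α‖ = 1 := by
  have hdeg : (cubicCirclePoly α β).natDegree ≤ 6 := by
    unfold cubicCirclePoly; compute_degree
  have c₆ : (cubicCirclePoly α β).coeff 6 = α := by simp [cubicCirclePoly, coeff_X_pow]
  have c₄ : (cubicCirclePoly α β).coeff 4 = β := by simp [cubicCirclePoly, coeff_X_pow]
  have c₀ : (cubicCirclePoly α β).coeff 0 = conj α := by simp [cubicCirclePoly]
  obtain ⟨h₄, -, h₃⟩ := coeff_eq_of_three_sq_dvd h₁₂ h₁₃ h₂₃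
    (sq_dvd_cubicCirclePoly hle hz₁ hmax₁) (sq_dvd_cubicCirclePoly hle hz₂ hmax₂)
    (sq_dvd_cubicCirclePoly hle hz₃ hmax₃) hdeg
    (by simp [cubicCirclePoly, coeff_X_pow]) (by simp [cubicCirclePoly, coeff_X_pow])
    (by simp [coeff_cubicCirclePoly_three])
  rw [c₄] at h₄
  rw [coeff_cubicCirclePoly_three, c₆, c₀] at h₃
  refine ⟨h₄, (pow_eq_one_iff_of_nonneg (norm_nonneg α) two_ne_zero).mp ?_⟩
  have h : ((‖α‖ ^ 2 : ℝ) : ℂ) = 1 := by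
    push_cast
    rw [← Complex.mul_conj']
    linear_combination -h₃ / 4
  exact_mod_cast h

theorem Complex.norm_mk_eq_one_iff {x₁ x₂ : ℝ} : ‖(⟨x₁, x₂⟩ : ℂ)‖ = 1 ↔ x₁ ^ 2 + x₂ ^ 2 = 1 := by
  rw [← pow_eq_one_iff_of_nonneg (norm_nonneg _) two_ne_zero, Complex.sq_norm, Complex.normSq_mk,
    sq, sq]

theorem Complex.mk_cos_sin (φ : ℝ) : (⟨Real.cos φ, Real.sin φ⟩ : ℂ) = exp (φ * I) := by
  apply Complex.ext <;> simp [exp_ofReal_mul_I_re, exp_ofReal_mul_I_im]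

section Circle

open Real

theorem exists_cos_sin_eq {x₁ x₂ : ℝ} (hx : x₁ ^ 2 + x₂ ^ 2 = 1) :
    ∃ ψ : ℝ, cos ψ = x₁ ∧ sin ψ = x₂ := by
  obtain ⟨ψ, hψ⟩ := (Complex.norm_eq_one_iff _).mp (Complex.norm_mk_eq_one_iff.mpr hx)
  exact ⟨ψ, by simpa using congrArg Complex.re hψ, by simpa using congrArg Complex.im hψ⟩

theorem setOf_eq_of_eq_cos_three_mul {g : ℝ → ℝ → ℝ} {φ₀ : ℝ}
    (hg : ∀ φ, g (cos φ) (sin φ) = cos (3 * (φ - φ₀))) :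
    {x : ℝ × ℝ | x.1 ^ 2 + x.2 ^ 2 = 1 ∧ g x.1 x.2 = 1} =
      {(cos φ₀, sin φ₀), (cos (φ₀ + 2 * π / 3), sin (φ₀ + 2 * π / 3)),
        (cos (φ₀ - 2 * π / 3), sin (φ₀ - 2 * π / 3))} := by
  ext ⟨x₁, x₂⟩
  simp only [Set.mem_ofPred_eq, Set.mem_insert_iff, Set.mem_singleton_iff, Prod.mk.injEq]
  constructor
  · rintro ⟨hx, hgx⟩
    obtain ⟨ψ, rfl, rfl⟩ := exists_cos_sin_eq hx
    obtain ⟨n, hn⟩ := (cos_eq_one_iff _).mp ((hg ψ).symm.trans hgx)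
    obtain ⟨m, r, rfl, hr⟩ : ∃ m r : ℤ, n = 3 * m + r ∧ (r = 0 ∨ r = 1 ∨ r = -1) :=
      ⟨(n + 1) / 3, n - 3 * ((n + 1) / 3), by ring, by omega⟩
    have hψ : ψ = φ₀ + r * (2 * π / 3) + m * (2 * π) := by push_cast at hn; linarith
    rw [hψ, cos_add_int_mul_two_pi, sin_add_int_mul_two_pi]
    rcases hr with rfl | rfl | rfl
    · left; simp
    · right; left; simp
    · right; right; simp [sub_eq_add_neg]
  · rintro (⟨rfl, rfl⟩ | ⟨rfl, rfl⟩ | ⟨rfl, rfl⟩) <;> refine ⟨cos_sq_add_sin_sq _, ?_⟩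
    · rw [hg, sub_self, mul_zero, cos_zero]
    · rw [hg, show 3 * (φ₀ + 2 * π / 3 - φ₀) = 2 * π by ring, cos_two_pi]
    · rw [hg, show 3 * (φ₀ - 2 * π / 3 - φ₀) = -(2 * π) by ring, cos_neg, cos_two_pi]

end Circle

/-- Harmonic decomposition: a harmonic cubic `Re (α z³)` plus `|z|²` times a linear form
`Re (β z)`. -/
theorem binaryCubic_eq_re (c30 c21 c12 c03 x₁ x₂ : ℝ) :
    c30 * x₁ ^ 3 + 3 * c21 * x₁ ^ 2 * x₂ + 3 * c12 * x₁ * x₂ ^ 2 + c03 * x₂ ^ 3 =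
      ((⟨(c30 - 3 * c12) / 4, (c03 - 3 * c21) / 4⟩ : ℂ) * (⟨x₁, x₂⟩ : ℂ) ^ 3).re
        + (x₁ ^ 2 + x₂ ^ 2) *
          ((⟨3 * (c30 + c12) / 4, -3 * (c21 + c03) / 4⟩ : ℂ) * ⟨x₁, x₂⟩).re := by
  simp only [pow_succ, pow_zero, one_mul, Complex.mul_re, Complex.mul_im]
  ring

open Real in
theorem stmt_9 (c30 c21 c12 c03 : ℝ)
    (p : ℝ → ℝ → ℝ)
    (hp : p = fun x1 x2 => c30*x1^3 + 3*c21*x1^2*x2 + 3*c12*x1*x2^2 + c03*x2^3)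
    (hmax : IsGreatest {y : ℝ | ∃ x1 x2 : ℝ, x1^2 + x2^2 = 1 ∧ y = p x1 x2} 1)
    (u v w : ℝ × ℝ) (hu : u.1^2 + u.2^2 = 1) (hv : v.1^2 + v.2^2 = 1)
    (hw : w.1^2 + w.2^2 = 1)
    (huv : u ≠ v) (huw : u ≠ w) (hvw : v ≠ w)
    (hpu : p u.1 u.2 = 1) (hpv : p v.1 v.2 = 1) (hpw : p w.1 w.2 = 1) :
    ∃ φ0 : ℝ,
      (∀ φ : ℝ, p (cos φ) (sin φ) = cos (3*(φ - φ0))) ∧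
      {x : ℝ × ℝ | x.1^2 + x.2^2 = 1 ∧ p x.1 x.2 = 1} =
        {(cos φ0, sin φ0), (cos (φ0 + 2*π/3), sin (φ0 + 2*π/3)),
          (cos (φ0 - 2*π/3), sin (φ0 - 2*π/3))} := by
  set α : ℂ := ⟨(c30 - 3 * c12) / 4, (c03 - 3 * c21) / 4⟩
  set β : ℂ := ⟨3 * (c30 + c12) / 4, -3 * (c21 + c03) / 4⟩
  have hpα : ∀ x₁ x₂, x₁ ^ 2 + x₂ ^ 2 = 1 →
      p x₁ x₂ = (α * (⟨x₁, x₂⟩ : ℂ) ^ 3 + β * (⟨x₁, x₂⟩ : ℂ)).re := by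
    intro x₁ x₂ hx
    simp only [hp]
    rw [binaryCubic_eq_re, hx, one_mul, Complex.add_re]
  have hle : ∀ z : ℂ, ‖z‖ = 1 → (α * z ^ 3 + β * z).re ≤ 1 := fun z hz => by
    have hz' := Complex.norm_mk_eq_one_iff.mp hz
    exact hpα _ _ hz' ▸ hmax.2 ⟨z.re, z.im, hz', rfl⟩
  have hinj := Complex.equivRealProd.symm.injective
  obtain ⟨hβ, hα⟩ := eq_zero_and_norm_eq_one_of_three_maxima hle
    (Complex.norm_mk_eq_one_iff.mpr hu) (Complex.norm_mk_eq_one_iff.mpr hv)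
    (Complex.norm_mk_eq_one_iff.mpr hw) (hinj.ne huv) (hinj.ne huw) (hinj.ne hvw)
    (hpα _ _ hu ▸ hpu) (hpα _ _ hv ▸ hpv) (hpα _ _ hw ▸ hpw)
  obtain ⟨θ, hθ⟩ := (Complex.norm_eq_one_iff α).mp hα
  have hpolar : ∀ φ : ℝ, p (cos φ) (sin φ) = cos (3 * (φ - -θ / 3)) := fun φ => by
    rw [hpα _ _ (cos_sq_add_sin_sq φ), hβ, zero_mul, add_zero, ← hθ, Complex.mk_cos_sin,
      ← Complex.exp_nat_mul, ← Complex.exp_add,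
      show θ * Complex.I + (3 : ℕ) * (φ * Complex.I) = (3 * (φ - -θ / 3) : ℝ) * Complex.I by
        push_cast; ring,
      Complex.exp_ofReal_mul_I_re]
  exact ⟨-θ / 3, hpolar, setOf_eq_of_eq_cos_three_mul hpolar⟩
end

section
/- Let p be a homogeneous cubic on ℝ^2 attaining maximum value 1 on the unit circle at two distinct points u, v. Then the angle between u and v is at most 2π/3. -/
/-!
Rotate coordinates so that `u = (1, 0)` and `v = (t, s)` with `s > 0` (reflecting if needed).
Both points are maxima of `p` on the circle, so the tangential derivatives vanish there; together
with `p u = p v = 1` this pins down `p = x³ + 3c x y² + d y³` with `s² c = t - t²` and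
`s³ d = (1 - t)² (1 + 2t)`. The bound `p ≤ 1` at `(-1/2, -√3/2)`, the point at angle `-2π/3`,
then reads `(1 - t) (1 + 2t) (3s + √3 (1 - t)) ≥ 0`, i.e. `t ≥ -1/2`.
-/

open Real

namespace BinaryCubic

def cubic (a b c d x y : ℝ) : ℝ := a*x^3 + 3*b*x^2*y + 3*c*x*y^2 + d*y^3

/-- `cubicPolar a b c d x₁ x₂ y₁ y₂` is the polarization `P(x, x, y)` of the cubic, so that
`cubic (x + ε y) = cubic x + 3 ε P(x, x, y) + O(ε²)`. -/
def cubicPolar (a b c d x₁ x₂ y₁ y₂ : ℝ) : ℝ :=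
  a*x₁^2*y₁ + b*(x₁^2*y₂ + 2*x₁*x₂*y₁) + c*(2*x₁*x₂*y₂ + x₂^2*y₁) + d*x₂^2*y₂

variable (a b c d : ℝ)

theorem cubic_comp_frame (u₁ u₂ e₁ e₂ x y : ℝ) :
    cubic a b c d (x*u₁ + y*e₁) (x*u₂ + y*e₂) =
      cubic (cubic a b c d u₁ u₂) (cubicPolar a b c d u₁ u₂ e₁ e₂)
        (cubicPolar a b c d e₁ e₂ u₁ u₂) (cubic a b c d e₁ e₂) x y := by
  simp only [cubic, cubicPolar]; ring

theorem cubic_neg_right (x y : ℝ) : cubic a b c d x (-y) = cubic a (-b) c (-d) x y := by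
  simp only [cubic]; ring

theorem hasDerivAt_cubic_cos_sin :
    HasDerivAt (fun θ => cubic a b c d (cos θ) (sin θ)) (3*b) 0 := by
  have hc := hasDerivAt_cos 0
  have hs := hasDerivAt_sin 0
  have h := (((hc.pow 3).const_mul a).add (((hc.pow 2).mul hs).const_mul (3*b))).add
    (((hc.mul (hs.pow 2)).const_mul (3*c)).add ((hs.pow 3).const_mul d))
  refine (h.congr_of_eventuallyEq (.of_forall fun θ => ?_)).congr_deriv ?_
  · simp only [cubic, Pi.add_apply, Pi.mul_apply, Pi.pow_apply]; ring
  · simp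

theorem cubicPolar_eq_zero_of_isMax (hb : ∀ x y, x^2 + y^2 = 1 → cubic a b c d x y ≤ 1)
    {w₁ w₂ f₁ f₂ : ℝ} (hw : w₁^2 + w₂^2 = 1) (hf : f₁^2 + f₂^2 = 1) (hwf : w₁*f₁ + w₂*f₂ = 0)
    (hmax : cubic a b c d w₁ w₂ = 1) : cubicPolar a b c d w₁ w₂ f₁ f₂ = 0 := by
  have hcircle : ∀ θ, (cos θ*w₁ + sin θ*f₁)^2 + (cos θ*w₂ + sin θ*f₂)^2 = 1 := fun θ => by
    linear_combination cos θ^2 * hw + sin θ^2 * hf + 2*cos θ*sin θ*hwf + sin_sq_add_cos_sq θ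
  have hlocal : IsLocalMax
      (fun θ => cubic a b c d (cos θ*w₁ + sin θ*f₁) (cos θ*w₂ + sin θ*f₂)) 0 :=
    .of_forall fun θ => by simpa [hmax] using hb _ _ (hcircle θ)
  simp_rw [cubic_comp_frame] at hlocal
  have := hlocal.hasDerivAt_eq_zero (hasDerivAt_cubic_cos_sin ..)
  linarith

theorem neg_half_le_of_isMax_of_pos (hb : ∀ x y, x^2 + y^2 = 1 → cubic a b c d x y ≤ 1)
    (h₁ : cubic a b c d 1 0 = 1) {t s : ℝ} (hst : t^2 + s^2 = 1) (hs : 0 < s)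
    (hts : cubic a b c d t s = 1) : -1/2 ≤ t := by
  have ha : a = 1 := by simpa [cubic] using h₁
  have hb₀ : b = 0 := by
    simpa [cubicPolar] using cubicPolar_eq_zero_of_isMax a b c d hb (w₁ := 1) (w₂ := 0) (f₁ := 0)
      (f₂ := 1) (by norm_num) (by norm_num) (by norm_num) h₁
  have hcrit := cubicPolar_eq_zero_of_isMax a b c d hb hst (f₁ := -s) (f₂ := t)
    (by linear_combination hst) (by ring) hts
  subst ha hb₀
  simp only [cubic, cubicPolar] at hts hcrit
  have hc : s^2 * c = t - t^2 := by linear_combination t*hts - s*hcrit - (s^2*c + t^2) * hst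
  have hd : s^3 * d = (1 - t)^2 * (1 + 2*t) := by linear_combination hts - 3*t*hc
  have hr3 : √3 ^ 2 = 3 := sq_sqrt (by norm_num)
  have htest := hb (-1/2) (-√3/2) (by linear_combination hr3 / 4)
  simp only [cubic] at htest
  have key : 0 ≤ (3*(1 - t)*(3*s + √3*(1 - t))) * (1 + 2*t) := by
    linear_combination 8 * s^3 * htest + 3*s^3*c*hr3 + √3*s^3*d*hr3 + 9*s*hc + 3*√3*hd + 9*s*hst
  have ht : t < 1 := by nlinarith
  have hpos : 0 < 3*(1 - t)*(3*s + √3*(1 - t)) := by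
    have : 0 < √3 := by positivity
    have : 0 < 1 - t := by linarith
    positivity
  linarith [nonneg_of_mul_nonneg_right key hpos]

theorem neg_half_le_of_isMax (hb : ∀ x y, x^2 + y^2 = 1 → cubic a b c d x y ≤ 1)
    (h₁ : cubic a b c d 1 0 = 1) {t s : ℝ} (hst : t^2 + s^2 = 1) (hne : (t, s) ≠ (1, 0))
    (hts : cubic a b c d t s = 1) : -1/2 ≤ t := by
  rcases lt_trichotomy s 0 with hs | rfl | hs
  · refine neg_half_le_of_isMax_of_pos a (-b) c (-d) (fun x y hxy => ?_) ?_
      (s := -s) (by linear_combination hst) (by linarith) ?_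
    · rw [← cubic_neg_right]; exact hb _ _ (by linear_combination hxy)
    · rw [← cubic_neg_right, neg_zero]; exact h₁
    · rw [← cubic_neg_right, neg_neg]; exact hts
  · have ht : (t - 1) * (t + 1) = 0 := by linear_combination hst
    rcases mul_eq_zero.1 ht with ht | ht
    · exact absurd (by rw [sub_eq_zero.1 ht]) hne
    · simp only [cubic] at h₁ hts
      rw [eq_neg_of_add_eq_zero_left ht] at hts
      linarith
  · exact neg_half_le_of_isMax_of_pos a b c d hb h₁ hst hs hts

theorem neg_half_le_inner_of_isMax (hb : ∀ x y, x^2 + y^2 = 1 → cubic a b c d x y ≤ 1)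
    (u v : ℝ × ℝ) (hu : u.1^2 + u.2^2 = 1) (hv : v.1^2 + v.2^2 = 1) (huv : u ≠ v)
    (hpu : cubic a b c d u.1 u.2 = 1) (hpv : cubic a b c d v.1 v.2 = 1) :
    -1/2 ≤ u.1*v.1 + u.2*v.2 := by
  obtain ⟨u₁, u₂⟩ := u
  obtain ⟨v₁, v₂⟩ := v
  dsimp only at *
  set t := u₁*v₁ + u₂*v₂
  set s := u₁*v₂ - u₂*v₁
  have hv₁ : t*u₁ + s*(-u₂) = v₁ := by linear_combination v₁ * hu
  have hv₂ : t*u₂ + s*u₁ = v₂ := by linear_combination v₂ * hu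
  refine neg_half_le_of_isMax (cubic a b c d u₁ u₂) (cubicPolar a b c d u₁ u₂ (-u₂) u₁)
    (cubicPolar a b c d (-u₂) u₁ u₁ u₂) (cubic a b c d (-u₂) u₁) (fun x y hxy => ?_) ?_
    (t := t) (s := s) (by linear_combination (v₁^2 + v₂^2) * hu + hv) (fun hts => huv ?_) ?_
  · rw [← cubic_comp_frame]; exact hb _ _ (by linear_combination (x^2 + y^2) * hu + hxy)
  · simpa [cubic] using hpu
  · obtain ⟨ht, hs⟩ := Prod.mk.inj hts
    rw [← hv₁, ← hv₂, ht, hs]; simp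
  · rw [← cubic_comp_frame, hv₁, hv₂]; exact hpv

end BinaryCubic

theorem Real.arccos_le_two_pi_div_three {x : ℝ} (hx : -1/2 ≤ x) : arccos x ≤ 2*π/3 := by
  have hcos : cos (2*π/3) = -1/2 := by
    rw [show 2*π/3 = π - π/3 by ring, cos_pi_sub, cos_pi_div_three]; ring
  calc arccos x ≤ arccos (cos (2*π/3)) := arccos_le_arccos (hcos ▸ hx)
    _ = 2*π/3 := arccos_cos (by positivity) (by linarith [pi_pos])

open Real in
theorem stmt_10 (c30 c21 c12 c03 : ℝ)
    (p : ℝ → ℝ → ℝ)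
    (hp : p = fun x1 x2 => c30*x1^3 + 3*c21*x1^2*x2 + 3*c12*x1*x2^2 + c03*x2^3)
    (hb : ∀ x1 x2 : ℝ, x1^2 + x2^2 = 1 → p x1 x2 ≤ 1)
    (u v : ℝ × ℝ) (hu : u.1^2 + u.2^2 = 1) (hv : v.1^2 + v.2^2 = 1)
    (huv : u ≠ v) (hpu : p u.1 u.2 = 1) (hpv : p v.1 v.2 = 1) :
    arccos (u.1*v.1 + u.2*v.2) ≤ 2*π/3 := by
  subst hp
  exact arccos_le_two_pi_div_three
    (BinaryCubic.neg_half_le_inner_of_isMax c30 c21 c12 c03 hb u v hu hv huv hpu hpv)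
end

section
/- For all real x1, x2, x3 with x1^2 + x2^2 + x3^2 = 1 and every c ∈ (-1, 1/2), the identity x1^3 + (3/2)(x2^2 + 2c x3^2) x1 + √(1-2c) ((3/2) x2^2 x3 + (1+c) x3^3) = -(1/2)(x1 + √(1-2c) x3)^3 + (3/2)(x1 + √(1-2c) x3) holds. Consequently this cubic is bounded by 1 on the unit sphere, with its maximum attained exactly on the circle {x ∈ S^2 : x1 + √(1-2c) x3 = 1}. -/
/-!
On the unit sphere, eliminating `x2^2 = 1 - x1^2 - x3^2` and `s^2 = 1 - 2c` (with `s = √(1 - 2c)`)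
turns the cubic into `f t = -(1/2) t^3 + (3/2) t` evaluated at `t = x1 + s x3`. Since
`1 - f t = (1/2) (t - 1)^2 (t + 2)`, the bound and its equality case follow once `t > -2`, and that
holds by Cauchy–Schwarz: `t^2 ≤ (1 + s^2) (x1^2 + x3^2) ≤ 2 - 2c < 4` because `c > -1`.
-/

lemma one_sub_cubic_eq_s12 (t : ℝ) :
    1 - (-(1/2)*t^3 + (3/2)*t) = (1/2) * (t - 1)^2 * (t + 2) := by
  ring

lemma cubic_le_one {t : ℝ} (ht : -2 ≤ t) : -(1/2)*t^3 + (3/2)*t ≤ 1 := by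
  have : 0 ≤ (1/2) * (t - 1)^2 * (t + 2) := by
    have : 0 ≤ t + 2 := by linarith
    positivity
  linarith [one_sub_cubic_eq_s12 t]

lemma cubic_eq_one_iff {t : ℝ} (ht : -2 < t) : -(1/2)*t^3 + (3/2)*t = 1 ↔ t = 1 := by
  have key := one_sub_cubic_eq_s12 t
  constructor
  · intro h
    have : (t - 1)^2 * (t + 2) = 0 := by linarith
    rcases mul_eq_zero.mp this with h1 | h2
    · exact sub_eq_zero.mp (pow_eq_zero_iff two_ne_zero |>.mp h1)
    · linarith
  · rintro rfl
    norm_num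

lemma sq_add_mul_le (x y s : ℝ) : (x + s*y)^2 ≤ (1 + s^2) * (x^2 + y^2) := by
  nlinarith [sq_nonneg (s*x - y)]

lemma zonal_cubic_eq {c s x1 x2 x3 : ℝ} (hs : s^2 = 1 - 2*c) (hx : x1^2 + x2^2 + x3^2 = 1) :
    x1^3 + (3/2)*(x2^2 + 2*c*x3^2)*x1 + s * ((3/2)*x2^2*x3 + (1 + c)*x3^3) =
      -(1/2)*(x1 + s*x3)^3 + (3/2)*(x1 + s*x3) := by
  rw [show x2^2 = 1 - x1^2 - x3^2 by linarith]
  linear_combination ((3/2)*x1*x3^2 + (1/2)*x3^3*s) * hs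

lemma neg_two_lt_add_mul {c s x1 x2 x3 : ℝ} (hc : -1 < c) (hs : s^2 = 1 - 2*c)
    (hx : x1^2 + x2^2 + x3^2 = 1) : -2 < x1 + s*x3 := by
  have h13 : x1^2 + x3^2 ≤ 1 := by nlinarith [sq_nonneg x2]
  have hsq : (x1 + s*x3)^2 < 2^2 :=
    calc (x1 + s*x3)^2 ≤ (1 + s^2) * (x1^2 + x3^2) := sq_add_mul_le x1 x3 s
      _ ≤ (1 + s^2) * 1 := by gcongr
      _ < 2^2 := by linarith
  exact (abs_lt_of_sq_lt_sq' hsq zero_le_two).1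

open Real in
theorem stmt_12 (c : ℝ) (hc : c ∈ Set.Ioo (-1 : ℝ) (1/2))
    (x1 x2 x3 : ℝ) (hx : x1^2 + x2^2 + x3^2 = 1) :
    (x1^3 + (3/2)*(x2^2 + 2*c*x3^2)*x1
        + Real.sqrt (1 - 2*c) * ((3/2)*x2^2*x3 + (1 + c)*x3^3) =
      -(1/2)*(x1 + Real.sqrt (1 - 2*c)*x3)^3 + (3/2)*(x1 + Real.sqrt (1 - 2*c)*x3)) ∧
    (x1^3 + (3/2)*(x2^2 + 2*c*x3^2)*x1
        + Real.sqrt (1 - 2*c) * ((3/2)*x2^2*x3 + (1 + c)*x3^3) ≤ 1) ∧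
    (x1^3 + (3/2)*(x2^2 + 2*c*x3^2)*x1
        + Real.sqrt (1 - 2*c) * ((3/2)*x2^2*x3 + (1 + c)*x3^3) = 1 ↔
      x1 + Real.sqrt (1 - 2*c)*x3 = 1) := by
  have hs : Real.sqrt (1 - 2*c) ^ 2 = 1 - 2*c := Real.sq_sqrt (by linarith [hc.2])
  have ht := neg_two_lt_add_mul hc.1 hs hx
  rw [zonal_cubic_eq hs hx]
  exact ⟨rfl, cubic_le_one ht.le, cubic_eq_one_iff ht⟩
end

section
/- With p12(φ) = (a - 1/2) sin^2 φ + 1/2 and p03(φ) = sin φ (d sin^2 φ + 3b cos φ sin φ + 3c cos^2 φ), the inequality 1 - 2 p12(φ)^3 - 3 p12(φ)^2 - p03(φ)^2 ≥ 0 for all φ ∈ [-π, π] (together with p12(φ) ≥ -1 for all φ) holds if and only if both 2×2 matrices √(1-2a)·diag(3, 2(1+a)) ± [[6c, 3b],[3b, 2d]] are positive semidefinite (where necessarily a ≤ 1/2). -/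
/-!
On the unit circle `(t, s) = (cos φ, sin φ)` put `w = 3/2 t² + (1 + a) s²`,
`q = d s² + 3 b t s + 3 c t²` and `r = √(1 - 2a)`. Then `1 + p12 = w`, `p03 = s q`, and the
factorisation `1 - 2p³ - 3p² = (1 + p)² (1 - 2p)` turns the cubic condition into
`s² ((r w)² - q²) ≥ 0`, i.e. `|q| ≤ r w` wherever `s ≠ 0`. The two matrices are those of the
binary quadratic forms `2 (r w ± q)`, so by homogeneity, and continuity across `s = 0`, this is
exactly their positive semidefiniteness. Evaluating at `φ = π/2` gives `a ≤ 1/2`.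
-/

open Real Set

def quadForm (A B C x y : ℝ) : ℝ := A * x ^ 2 + 2 * B * x * y + C * y ^ 2

lemma quadForm_mul_mul (A B C ρ x y : ℝ) :
    quadForm A B C (ρ * x) (ρ * y) = ρ ^ 2 * quadForm A B C x y := by
  unfold quadForm; ring

lemma Matrix.posSemidef_fin_two_iff (A B C : ℝ) :
    (!![A, B; B, C] : Matrix (Fin 2) (Fin 2) ℝ).PosSemidef ↔
      ∀ x y : ℝ, 0 ≤ quadForm A B C x y := by
  have hB : (!![A, B; B, C] : Matrix (Fin 2) (Fin 2) ℝ).IsHermitian := by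
    ext i j; fin_cases i <;> fin_cases j <;> rfl
  have hform (v : Fin 2 → ℝ) :
      dotProduct (star v) (!![A, B; B, C].mulVec v) = quadForm A B C (v 0) (v 1) := by
    simp only [dotProduct, Pi.star_apply, star_trivial, mulVec, of_apply, cons_val',
      cons_val_fin_one, Fin.sum_univ_two, Fin.isValue, cons_val_zero, cons_val_one, quadForm]
    ring
  simp only [Matrix.posSemidef_iff_dotProduct_mulVec, hform, hB, true_and]
  exact ⟨fun h x y => by simpa using h ![x, y], fun h v => h (v 0) (v 1)⟩

lemma exists_eq_mul_cos_sin (x y : ℝ) :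
    ∃ ρ, ∃ φ ∈ Icc (-π) π, x = ρ * cos φ ∧ y = ρ * sin φ :=
  ⟨‖(⟨x, y⟩ : ℂ)‖, Complex.arg ⟨x, y⟩,
    ⟨(Complex.neg_pi_lt_arg _).le, Complex.arg_le_pi _⟩,
    (Complex.norm_mul_cos_arg ⟨x, y⟩).symm, (Complex.norm_mul_sin_arg ⟨x, y⟩).symm⟩

lemma quadForm_nonneg_of_forall_angle {A B C : ℝ}
    (h : ∀ φ ∈ Icc (-π) π, sin φ ≠ 0 → 0 ≤ quadForm A B C (cos φ) (sin φ)) (x y : ℝ) :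
    0 ≤ quadForm A B C x y := by
  refine (dense_compl_singleton (0 : ℝ)).induction (P := fun y => 0 ≤ quadForm A B C x y)
    (fun y hy => ?_) (isClosed_le continuous_const (by unfold quadForm; fun_prop)) y
  obtain ⟨ρ, φ, hφ, rfl, rfl⟩ := exists_eq_mul_cos_sin x y
  rw [quadForm_mul_mul]
  exact mul_nonneg (sq_nonneg ρ) (h φ hφ (right_ne_zero_of_mul hy))

lemma one_sub_two_mul_cube_sub_three_mul_sq (p : ℝ) :
    1 - 2 * p ^ 3 - 3 * p ^ 2 = (1 + p) ^ 2 * (1 - 2 * p) := by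
  ring

lemma le_half_of_one_sub_two_mul_cube_sub_three_mul_sq_nonneg {p : ℝ}
    (h : 0 ≤ 1 - 2 * p ^ 3 - 3 * p ^ 2) : p ≤ 1 / 2 := by
  rw [one_sub_two_mul_cube_sub_three_mul_sq] at h
  by_contra! hlt
  have : 0 < (1 + p) ^ 2 := by positivity
  nlinarith

lemma abs_le_of_mul_sq_sub_nonneg {X q s : ℝ} (hs : s ≠ 0) (hX : 0 ≤ X)
    (h : 0 ≤ s ^ 2 * X ^ 2 - (s * q) ^ 2) : |q| ≤ X := by
  refine abs_le_of_sq_le_sq (le_of_mul_le_mul_left ?_ (pow_pos (sq_pos_of_ne_zero hs) 1)) hX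
  linarith [mul_pow s q 2]

section UnitCircle

variable {a b c d r t s : ℝ}

lemma one_add_p12_eq (hts : t ^ 2 + s ^ 2 = 1) :
    1 + ((a - 1/2) * s ^ 2 + 1/2) = 3/2 * t ^ 2 + (1 + a) * s ^ 2 := by
  linear_combination -3/2 * hts

lemma cubic_p12_eq (hr : r ^ 2 = 1 - 2 * a) (hts : t ^ 2 + s ^ 2 = 1) :
    1 - 2 * ((a - 1/2) * s ^ 2 + 1/2) ^ 3 - 3 * ((a - 1/2) * s ^ 2 + 1/2) ^ 2
      = s ^ 2 * (r * (3/2 * t ^ 2 + (1 + a) * s ^ 2)) ^ 2 := by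
  rw [one_sub_two_mul_cube_sub_three_mul_sq, one_add_p12_eq hts, mul_pow r, hr]
  ring

lemma quadForm_add_eq :
    quadForm (r * 3 + 6 * c) (3 * b) (r * (2 * (1 + a)) + 2 * d) t s
      = 2 * (r * (3/2 * t ^ 2 + (1 + a) * s ^ 2) + (d * s ^ 2 + 3 * b * t * s + 3 * c * t ^ 2)) := by
  unfold quadForm; ring

lemma quadForm_sub_eq :
    quadForm (r * 3 - 6 * c) (-(3 * b)) (r * (2 * (1 + a)) - 2 * d) t s
      = 2 * (r * (3/2 * t ^ 2 + (1 + a) * s ^ 2) - (d * s ^ 2 + 3 * b * t * s + 3 * c * t ^ 2)) := by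
  unfold quadForm; ring

variable (hr : r ^ 2 = 1 - 2 * a) (hr0 : 0 ≤ r) (hts : t ^ 2 + s ^ 2 = 1)
include hr hr0 hts

lemma quadForms_nonneg_of_p12_conditions (hs : s ≠ 0)
    (h : (a - 1/2) * s ^ 2 + 1/2 ≥ -1 ∧
      1 - 2 * ((a - 1/2) * s ^ 2 + 1/2) ^ 3 - 3 * ((a - 1/2) * s ^ 2 + 1/2) ^ 2
        - (s * (d * s ^ 2 + 3 * b * t * s + 3 * c * t ^ 2)) ^ 2 ≥ 0) :
    0 ≤ quadForm (r * 3 + 6 * c) (3 * b) (r * (2 * (1 + a)) + 2 * d) t s ∧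
      0 ≤ quadForm (r * 3 - 6 * c) (-(3 * b)) (r * (2 * (1 + a)) - 2 * d) t s := by
  obtain ⟨hp, hcubic⟩ := h
  have hw : 0 ≤ 3/2 * t ^ 2 + (1 + a) * s ^ 2 := by linarith [one_add_p12_eq (a := a) hts]
  rw [cubic_p12_eq hr hts] at hcubic
  have hq := abs_le.1 (abs_le_of_mul_sq_sub_nonneg hs (mul_nonneg hr0 hw) hcubic)
  rw [quadForm_add_eq, quadForm_sub_eq]
  constructor <;> linarith

lemma p12_conditions_of_quadForms_nonneg
    (hplus : 0 ≤ quadForm (r * 3 + 6 * c) (3 * b) (r * (2 * (1 + a)) + 2 * d) t s)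
    (hminus : 0 ≤ quadForm (r * 3 - 6 * c) (-(3 * b)) (r * (2 * (1 + a)) - 2 * d) t s) :
    (a - 1/2) * s ^ 2 + 1/2 ≥ -1 ∧
      1 - 2 * ((a - 1/2) * s ^ 2 + 1/2) ^ 3 - 3 * ((a - 1/2) * s ^ 2 + 1/2) ^ 2
        - (s * (d * s ^ 2 + 3 * b * t * s + 3 * c * t ^ 2)) ^ 2 ≥ 0 := by
  rw [quadForm_add_eq] at hplus
  rw [quadForm_sub_eq] at hminus
  constructor
  · have hrw : 0 ≤ r * (3/2 * t ^ 2 + (1 + a) * s ^ 2) := by linarith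
    have hw : 0 ≤ 3/2 * t ^ 2 + (1 + a) * s ^ 2 := by
      rcases hr0.eq_or_lt with rfl | hr0
      · nlinarith
      · exact nonneg_of_mul_nonneg_right hrw hr0
    linarith [one_add_p12_eq (a := a) hts]
  · rw [cubic_p12_eq hr hts]
    nlinarith [mul_nonneg (sq_nonneg s) (mul_nonneg hplus hminus)]

end UnitCircle

open Real in
theorem stmt_14 (a b c d : ℝ)
    (p12 p03 : ℝ → ℝ)
    (h12 : p12 = fun φ => (a - 1/2) * (sin φ)^2 + 1/2)
    (h03 : p03 = fun φ => sin φ * (d * (sin φ)^2 + 3*b*(cos φ)*(sin φ) + 3*c*(cos φ)^2)) :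
    ((∀ φ ∈ Set.Icc (-π) π, p12 φ ≥ -1 ∧
        1 - 2*(p12 φ)^3 - 3*(p12 φ)^2 - (p03 φ)^2 ≥ 0)) ↔
      (a ≤ 1/2 ∧
        (!![Real.sqrt (1 - 2*a) * 3 + 6*c, 3*b;
            3*b, Real.sqrt (1 - 2*a) * (2*(1 + a)) + 2*d] :
          Matrix (Fin 2) (Fin 2) ℝ).PosSemidef ∧
        (!![Real.sqrt (1 - 2*a) * 3 - 6*c, -(3*b);
            -(3*b), Real.sqrt (1 - 2*a) * (2*(1 + a)) - 2*d] :
          Matrix (Fin 2) (Fin 2) ℝ).PosSemidef) := by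
  subst h12 h03
  simp only [Matrix.posSemidef_fin_two_iff]
  constructor
  · intro h
    have ha : a ≤ 1/2 := by
      have h' := (h (π / 2) ⟨by linarith [pi_pos], by linarith [pi_pos]⟩).2
      simp only [sin_pi_div_two, cos_pi_div_two] at h'
      exact le_half_of_one_sub_two_mul_cube_sub_three_mul_sq_nonneg (by nlinarith)
    have hr := sq_sqrt (by linarith : 0 ≤ 1 - 2 * a)
    have key (φ) (hφ : φ ∈ Icc (-π) π) (hs : sin φ ≠ 0) :=
      quadForms_nonneg_of_p12_conditions hr (sqrt_nonneg _) (cos_sq_add_sin_sq φ) hs (h φ hφ)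
    exact ⟨ha, quadForm_nonneg_of_forall_angle fun φ hφ hs => (key φ hφ hs).1,
      quadForm_nonneg_of_forall_angle fun φ hφ hs => (key φ hφ hs).2⟩
  · rintro ⟨ha, hplus, hminus⟩ φ -
    exact p12_conditions_of_quadForms_nonneg (sq_sqrt (by linarith)) (sqrt_nonneg _)
      (cos_sq_add_sin_sq φ) (hplus _ _) (hminus _ _)
end

section
/- Let b ∈ ℝ^4 satisfy b_i > 0 and b1+b2+b3+b4 = 1, and let Γ be the 4×4 symmetric matrix with Γ_ii = 1 and Γ_ij = -1/2 + (3/2)·1/((b_i^{-1}-1)(b_j^{-1}-1)) for i ≠ j. Then all off-diagonal entries of Γ lie in the open interval (-1/2, 1), the matrix Γ is positive semidefinite, and its determinant is zero (so Γ has rank 3). -/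
/-!
Write `c i = b i / (1 - b i)`, so that `Γ i j = -1/2 + 3/2 c_i c_j` off the diagonal, and
`c_i c_j < 1` exactly when `b_i + b_j < 1`. Since `c_i (1 - b_i) = b_i`, `∑ (1 - b_i) = 3` and
`∑ c_i (1 - b_i) = 1`, the vector `1 - b` lies in the kernel of `Γ`, so `det Γ = 0`. Because its last
coordinate is nonzero, every vector differs from one with vanishing last coordinate by a kernel
vector, and positivity of `Γ` reduces to its leading `3 × 3` block. That block has unit diagonal,
positive `2 × 2` minor, and determinant `9/4 (e₂ (1 - e₂) + e₁ e₃ + 3 e₃²)` in the elementary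
symmetric functions of `c₀, c₁, c₂`, which is positive because
`(1 - e₂ - 2 e₃) ∏ (1 - b_i) = 1 - b₀ - b₁ - b₂ > 0`.
-/

open Matrix Finset

namespace Matrix

section Field

variable {R : Type*} [Field R] [PartialOrder R] [StarRing R]

theorem PosSemidef.of_mulVec_eq_zero_of_submatrix_succAbove {n : ℕ}
    {A : Matrix (Fin (n + 1)) (Fin (n + 1)) R} (hA : A.IsHermitian) {w : Fin (n + 1) → R}
    (hw : A *ᵥ w = 0) {k : Fin (n + 1)} (hk : w k ≠ 0)
    (hsub : (A.submatrix k.succAbove k.succAbove).PosSemidef) : A.PosSemidef := by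
  refine .of_dotProduct_mulVec_nonneg hA fun x => ?_
  set y := x - (x k / w k) • w with hy
  have hyk : y k = 0 := by simp [hy, hk]
  have hAy : A *ᵥ y = A *ᵥ x := by simp [hy, mulVec_sub, mulVec_smul, hw]
  have hwA : star w ᵥ* A = 0 := by rw [← hA.eq, ← star_mulVec, hw, star_zero]
  have hquad : star y ⬝ᵥ (A *ᵥ y) = star x ⬝ᵥ (A *ᵥ x) := by
    rw [hAy, hy, star_sub, sub_dotProduct, star_smul, smul_dotProduct, dotProduct_mulVec (star w),
      hwA, zero_dotProduct, smul_zero, sub_zero]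
  rw [← hquad]
  convert hsub.dotProduct_mulVec_nonneg (y ∘ k.succAbove) using 1
  simp [dotProduct, mulVec, Fin.sum_univ_succAbove _ k, hyk]

end Field

section OrderedField

variable {R : Type*} [Field R] [LinearOrder R] [IsStrictOrderedRing R] [StarRing R] [TrivialStar R]

theorem posSemidef_of_fin_three {A : Matrix (Fin 3) (Fin 3) R} (hA : A.IsHermitian)
    (h₁ : 0 < A 0 0) (h₂ : 0 < A 0 0 * A 1 1 - A 0 1 * A 1 0) (h₃ : 0 ≤ A.det) :
    A.PosSemidef := by
  refine .of_dotProduct_mulVec_nonneg hA fun x => ?_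
  have hsymm : ∀ i j, A j i = A i j := fun i j => by simpa using hA.apply i j
  set a := A 0 0
  set Δ := a * A 1 1 - A 0 1 * A 1 0
  -- the `LDLᵀ` decomposition of `A`
  have key : a * Δ * (star x ⬝ᵥ (A *ᵥ x)) =
      Δ * (a * x 0 + A 0 1 * x 1 + A 0 2 * x 2) ^ 2
        + (Δ * x 1 + (a * A 1 2 - A 0 1 * A 0 2) * x 2) ^ 2 + a * A.det * x 2 ^ 2 := by
    simp only [dotProduct, mulVec, Fin.sum_univ_three, star_trivial, Pi.star_apply, det_fin_three,
      hsymm 1 0, hsymm 2 0, hsymm 2 1, Δ]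
    ring
  exact nonneg_of_mul_nonneg_right (key ▸ by positivity) (mul_pos h₁ h₂)

end OrderedField

end Matrix

theorem Finset.sum_lt_one_of_card_lt {ι : Type*} [Fintype ι] {b : ι → ℝ} (hb : ∀ i, 0 < b i)
    (hsum : ∑ i, b i = 1) {s : Finset ι} (hs : #s < Fintype.card ι) : ∑ i ∈ s, b i < 1 := by
  obtain ⟨i, -, hi⟩ := exists_mem_notMem_of_card_lt_card (s := s) (t := univ) hs
  exact hsum ▸ sum_lt_sum_of_subset (subset_univ s) (mem_univ i) hi (hb i) fun j _ _ => (hb j).le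

noncomputable def odds (p : ℝ) : ℝ := p / (1 - p)

section Odds

variable {p q r : ℝ}

lemma odds_pos (h₀ : 0 < p) (h₁ : p < 1) : 0 < odds p :=
  div_pos h₀ (sub_pos.2 h₁)

lemma odds_mul_one_sub (h : p < 1) : odds p * (1 - p) = p :=
  div_mul_cancel₀ p (sub_pos.2 h).ne'

lemma inv_inv_sub_one (h : p ≠ 0) : (p⁻¹ - 1)⁻¹ = odds p := by
  rw [show p⁻¹ - 1 = (1 - p) / p by field_simp, inv_div, odds]

lemma odds_mul_odds_lt_one (hp : 0 < p) (hq : 0 < q) (h : p + q < 1) : odds p * odds q < 1 := by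
  rw [odds, odds, div_mul_div_comm, div_lt_one (by nlinarith)]
  nlinarith

lemma odds_esymm_two_lt_one (hp : 0 < p) (hq : 0 < q) (hr : 0 < r) (h : p + q + r < 1) :
    odds p * odds q + odds p * odds r + odds q * odds r < 1 := by
  have hp₁ : 0 < 1 - p := by linarith
  have hq₁ : 0 < 1 - q := by linarith
  have hr₁ : 0 < 1 - r := by linarith
  have key : (1 - (odds p * odds q + odds p * odds r + odds q * odds r)
      - 2 * (odds p * odds q * odds r)) * ((1 - p) * (1 - q) * (1 - r)) = 1 - p - q - r := by
    unfold odds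
    field_simp
    ring
  have he₃ : 0 < odds p * odds q * odds r := by
    have := odds_pos hp (by linarith)
    have := odds_pos hq (by linarith)
    have := odds_pos hr (by linarith)
    positivity
  nlinarith [mul_pos (mul_pos hp₁ hq₁) hr₁]

end Odds

section OddsGram

variable {ι κ : Type*} [DecidableEq ι] [DecidableEq κ]

noncomputable def oddsGram (c : ι → ℝ) : Matrix ι ι ℝ :=
  of fun i j => if i = j then 1 else -1/2 + 3/2 * (c i * c j)

namespace oddsGram

variable {c : ι → ℝ}

lemma apply_of_ne {i j : ι} (h : i ≠ j) : oddsGram c i j = -1/2 + 3/2 * (c i * c j) := by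
  simp [oddsGram, h]

lemma isHermitian : (oddsGram c).IsHermitian := by
  ext i j
  by_cases h : i = j
  · simp [h]
  · simp [apply_of_ne h, apply_of_ne (Ne.symm h), mul_comm]

lemma submatrix {f : κ → ι} (hf : Function.Injective f) :
    (oddsGram c).submatrix f f = oddsGram (c ∘ f) := by
  ext i j
  simp [oddsGram, hf.eq_iff]

lemma apply_mem_Ioo {i j : ι} (h : i ≠ j) (h₀ : 0 < c i * c j) (h₁ : c i * c j < 1) :
    oddsGram c i j ∈ Set.Ioo (-1/2) 1 := by
  rw [apply_of_ne h]
  constructor <;> linarith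

lemma det_fin_three (c : Fin 3 → ℝ) :
    (oddsGram c).det = 9/4 * ((c 0 * c 1 + c 0 * c 2 + c 1 * c 2)
        * (1 - (c 0 * c 1 + c 0 * c 2 + c 1 * c 2))
      + (c 0 + c 1 + c 2) * (c 0 * c 1 * c 2) + 3 * (c 0 * c 1 * c 2) ^ 2) := by
  simp only [Matrix.det_fin_three, oddsGram, of_apply, if_true, Fin.reduceEq, if_false]
  ring

lemma posSemidef_fin_three {c : Fin 3 → ℝ} (hc : ∀ i, 0 ≤ c i)
    (h : c 0 * c 1 + c 0 * c 2 + c 1 * c 2 < 1) : (oddsGram c).PosSemidef := by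
  have h₀₁ : 0 ≤ c 0 * c 1 := mul_nonneg (hc 0) (hc 1)
  have h₀₂ : 0 ≤ c 0 * c 2 := mul_nonneg (hc 0) (hc 2)
  have h₁₂ : 0 ≤ c 1 * c 2 := mul_nonneg (hc 1) (hc 2)
  refine posSemidef_of_fin_three isHermitian (by simp [oddsGram]) ?_ ?_
  · simp only [oddsGram, of_apply, if_true, Fin.reduceEq, if_false]
    nlinarith
  · rw [det_fin_three]
    have := hc 0
    have := hc 1
    have := hc 2
    have : 0 ≤ 1 - (c 0 * c 1 + c 0 * c 2 + c 1 * c 2) := by linarith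
    positivity

end oddsGram

lemma oddsGram_odds_comp {b : ι → ℝ} (hb : ∀ i, b i ≠ 0) :
    oddsGram (odds ∘ b) =
      of fun i j => if i = j then 1 else -1/2 + (3/2) * (((b i)⁻¹ - 1) * ((b j)⁻¹ - 1))⁻¹ := by
  ext i j
  simp only [oddsGram, of_apply, Function.comp_apply, mul_inv, inv_inv_sub_one (hb _)]

lemma oddsGram_odds_comp_mulVec_one_sub [Fintype ι] {b : ι → ℝ} (hb : ∀ i, b i < 1)
    (hsum : ∑ i, b i = 1) (hcard : Fintype.card ι = 4) : oddsGram (odds ∘ b) *ᵥ (1 - b) = 0 := by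
  ext i
  have hentry : ∀ j, oddsGram (odds ∘ b) i j =
      3/2 * odds (b i) * odds (b j) - 1/2 + if i = j then 3/2 * (1 - odds (b i) ^ 2) else 0 := by
    intro j
    by_cases h : i = j
    · subst h
      simp only [oddsGram, Function.comp_apply, of_apply, if_true]
      ring
    · simp only [oddsGram.apply_of_ne h, Function.comp_apply, h, if_false, add_zero]
      ring
  have h₁ : ∑ j, odds (b j) * (1 - b j) = 1 := by simp [odds_mul_one_sub, hb, hsum]
  have h₂ : ∑ j, (1 - b j) = 3 := by
    rw [sum_sub_distrib, hsum, sum_const, card_univ, hcard]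
    norm_num
  have hsplit : ∑ j, oddsGram (odds ∘ b) i j * (1 - b j) =
      3/2 * odds (b i) * ∑ j, odds (b j) * (1 - b j) - 1/2 * ∑ j, (1 - b j)
        + 3/2 * (1 - odds (b i) ^ 2) * (1 - b i) := by
    simp only [hentry, add_mul, sub_mul, ite_mul, zero_mul, sum_add_distrib, sum_sub_distrib,
      sum_ite_eq, mem_univ, if_true, ← mul_sum, mul_assoc]
  change ∑ j, oddsGram (odds ∘ b) i j * (1 - b j) = 0
  rw [hsplit, h₁, h₂]
  linear_combination (3/2 - 3/2 * odds (b i)) * odds_mul_one_sub (hb i)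

end OddsGram

theorem stmt_16 (b : Fin 4 → ℝ) (hb : ∀ i, 0 < b i) (hsum : ∑ i, b i = 1)
    (Γ : Matrix (Fin 4) (Fin 4) ℝ)
    (hΓ : Γ = fun i j => if i = j then 1 else
      -1/2 + (3/2) * (((b i)⁻¹ - 1) * ((b j)⁻¹ - 1))⁻¹) :
    (∀ i j, i ≠ j → Γ i j ∈ Set.Ioo (-1/2 : ℝ) 1) ∧ Γ.PosSemidef ∧ Γ.det = 0 := by
  have hb₁ : ∀ i, b i < 1 := fun i => by
    simpa using sum_lt_one_of_card_lt hb hsum (s := {i}) (by simp)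
  have hpair : ∀ i j, i ≠ j → b i + b j < 1 := fun i j hij => by
    simpa [sum_pair hij] using sum_lt_one_of_card_lt hb hsum (s := {i, j}) (by simp [card_pair hij])
  obtain rfl : Γ = oddsGram (odds ∘ b) := hΓ.trans (oddsGram_odds_comp fun i => (hb i).ne').symm
  have hker := oddsGram_odds_comp_mulVec_one_sub hb₁ hsum (Fintype.card_fin 4)
  have hw : (1 - b) (Fin.last 3) ≠ 0 := sub_ne_zero.2 (hb₁ 3).ne'
  refine ⟨fun i j hij => ?_, ?_, ?_⟩
  · exact oddsGram.apply_mem_Ioo hij (mul_pos (odds_pos (hb i) (hb₁ i)) (odds_pos (hb j) (hb₁ j)))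
      (odds_mul_odds_lt_one (hb i) (hb j) (hpair i j hij))
  · refine .of_mulVec_eq_zero_of_submatrix_succAbove oddsGram.isHermitian hker hw ?_
    rw [Fin.succAbove_last, oddsGram.submatrix (Fin.castSucc_injective 3)]
    have htriple : b 0 + b 1 + b 2 < 1 := by linarith [Fin.sum_univ_four b, hb 3]
    exact oddsGram.posSemidef_fin_three (fun i => (odds_pos (hb _) (hb₁ _)).le)
      (odds_esymm_two_lt_one (hb 0) (hb 1) (hb 2) htriple)
  · exact exists_mulVec_eq_zero_iff.mp ⟨1 - b, fun h => hw (congrFun h _), hker⟩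
end
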